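/- Let G be a finite group, H, K ≤ G subgroups, and k a commutative ring. Then there is an isomorphism of kK-modules Res^G_K (kG ⊗_{kH} N) ≅ ⊕_{[x] ∈ K\G/H} kK ⊗_{k(K ∩ xHx⁻¹)} (x·N), for every kH-module N, where x·N denotes N with the (K ∩ xHx⁻¹)-action given by u·n = (x⁻¹ux)n (Mackey decomposition formula for modules). -/

import Mathlib

namespace Stmt

variable {k : Type*} [CommRing k]
variable {Γ : Type*} [Group Γ] (H : Subgroup Γ)
variable {N : Type*} [AddCommGroup N] [Module k N]
variable (ρ : Representation k H N)

/-- Concrete model of the induced module `kΓ ⊗_{kH} N`: functions `f : Γ → N`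
with `f (g * h) = ρ h⁻¹ (f g)`; the elementary tensor `g ⊗ n` corresponds to the
function supported on the coset `g H` with value `ρ (x⁻¹ g) n` at `x ∈ g H`. -/
def Ind : Submodule k (Γ → N) where
  carrier := {f | ∀ (g : Γ) (h : H), f (g * h) = ρ h⁻¹ (f g)}
  add_mem' := by
    intro a b ha hb g h
    simp only [Pi.add_apply, ha g h, hb g h, map_add]
  zero_mem' := by intro g h; simp
  smul_mem' := by
    intro c f hf g h
    simp only [Pi.smul_apply, hf g h, map_smul]

theorem mem_Ind {f : Γ → N} : f ∈ Ind H ρ ↔ ∀ (g : Γ) (h : H), f (g * h) = ρ h⁻¹ (f g) :=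
  Iff.rfl

/-- The representation of `Γ` on the induced module, `(g • f) x = f (g⁻¹ x)`. -/
def indRep : Representation k Γ (Ind H ρ) where
  toFun g :=
    { toFun := fun f => ⟨fun x => f.1 (g⁻¹ * x), fun x h => by
        simpa [mul_assoc] using f.2 (g⁻¹ * x) h⟩
      map_add' := fun f f' => rfl
      map_smul' := fun c f => rfl }
  map_one' := by
    refine LinearMap.ext fun f => Subtype.ext (funext fun x => ?_)
    simp
  map_mul' g g' := by
    refine LinearMap.ext fun f => Subtype.ext (funext fun x => ?_)
    simp [mul_assoc]

/-- The elementary tensor `g ⊗ n` in the induced module. -/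
def elt [DecidablePred (· ∈ H)] (g : Γ) (n : N) : Ind H ρ :=
  ⟨fun x => if hx : x⁻¹ * g ∈ H then ρ ⟨x⁻¹ * g, hx⟩ n else 0, by
    intro x h
    dsimp only
    have key : (x * (h : Γ))⁻¹ * g = (h⁻¹ : H) * (x⁻¹ * g) := by
      simp [mul_inv_rev, mul_assoc]
    by_cases hx : x⁻¹ * g ∈ H
    · have hmem : (x * (h : Γ))⁻¹ * g ∈ H := by
        rw [key]; exact H.mul_mem (H.inv_mem h.2) hx
      simp only [hmem, hx, dif_pos]
      have : (⟨(x * (h : Γ))⁻¹ * g, hmem⟩ : H) = h⁻¹ * ⟨x⁻¹ * g, hx⟩ := by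
        ext; simpa using key
      rw [this, map_mul]
      rfl
    · have hmem : ¬ ((x * (h : Γ))⁻¹ * g ∈ H) := by
        rw [key]
        intro hc
        exact hx (by simpa using H.mul_mem (H.inv_mem (H.inv_mem h.2)) hc)
      rw [dif_neg hmem, dif_neg hx, map_zero]⟩


variable {G : Type} [Group G]

/-- The subgroup `K ∩ xHx⁻¹`, viewed as a subgroup of `K`. -/
def interSub (H K : Subgroup G) (x : G) : Subgroup K :=
  (Subgroup.map (MulAut.conj x).toMonoidHom H).subgroupOf K

/-- Conjugation `u ↦ x⁻¹ u x`, a homomorphism `K ∩ xHx⁻¹ → H`. -/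
def conjHom (H K : Subgroup G) (x : G) : interSub H K x →* H where
  toFun u := ⟨x⁻¹ * ((u : K) : G) * x, by
    obtain ⟨h, hh, he⟩ := u.2
    have : ((u : K) : G) = x * h * x⁻¹ := by
      simpa [MulAut.conj] using he.symm
    simpa [this, mul_assoc] using hh⟩
  map_one' := by ext; simp
  map_mul' u v := by
    ext
    simp only [Subgroup.coe_mul, Submonoid.coe_mul]
    group

/-!
Restricting `f ∈ Ind H ρ` to the double coset `K r H` amounts to the function `u ↦ f (u r)` on
`K`, which lies in the module induced from `K ∩ rHr⁻¹` with the conjugated action, and this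
restriction visibly commutes with `K`. Since `f (u r h) = ρ h⁻¹ (f (u r))` and `G` is the disjoint
union of the double cosets, `f` is determined by its restrictions; conversely a family of such
functions glues to an element of `Ind H ρ`, because the value `ρ h⁻¹ (F u)` assigned to `u r h`
does not depend on the decomposition.
-/

section Mackey

variable {H K : Subgroup G} {ρ : Representation k H N}

theorem mem_interSub_iff {x : G} {u : K} : u ∈ interSub H K x ↔ x⁻¹ * u * x ∈ H := by
  simp only [interSub, Subgroup.mem_subgroupOf, Subgroup.mem_map, MulEquiv.coe_toMonoidHom,
    MulAut.conj_apply]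
  constructor
  · rintro ⟨h, hh, hu⟩
    simpa [← hu, mul_assoc] using hh
  · exact fun hu => ⟨_, hu, by group⟩

@[simp]
theorem coe_conjHom_apply (x : G) (u : interSub H K x) :
    ((conjHom H K x u : H) : G) = x⁻¹ * (u : K) * x :=
  rfl

theorem ind_interSub_apply_eq_of_mul_eq {x : G}
    (F : Ind (interSub H K x) (ρ.comp (conjHom H K x))) {u u' : K} {h h' : H}
    (heq : (u : G) * x * h = u' * x * h') : ρ h⁻¹ (F.1 u) = ρ h'⁻¹ (F.1 u') := by
  have hconj : x⁻¹ * ((u'⁻¹ * u : K) : G) * x = ((h' * h⁻¹ : H) : G) :=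
    calc x⁻¹ * ((u'⁻¹ * u : K) : G) * x = (u' * x)⁻¹ * (u * x * h) * (h : G)⁻¹ := by
          push_cast; group
      _ = ((h' * h⁻¹ : H) : G) := by rw [heq]; push_cast; group
  set v : interSub H K x := ⟨u'⁻¹ * u, mem_interSub_iff.2 (hconj ▸ (h' * h⁻¹).2)⟩
  have hv : conjHom H K x v = h' * h⁻¹ := Subtype.ext hconj
  have hFu : F.1 u = ρ (h * h'⁻¹) (F.1 u') := by
    simpa [v, hv] using F.2 u' v
  rw [hFu, ← Module.End.mul_apply, ← map_mul, inv_mul_cancel_left]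

variable (H K ρ) in
def restrictDoubleCoset (x : G) :
    Ind H ρ →ₗ[k] Ind (interSub H K x) (ρ.comp (conjHom H K x)) where
  toFun f := ⟨fun u => f.1 (u * x), fun u v => by
    have hmul : ((u * v : K) : G) * x = u * x * (conjHom H K x v : H) := by
      simp only [Subgroup.coe_mul, coe_conjHom_apply]; group
    simp only [hmul, MonoidHom.comp_apply, map_inv]
    exact f.2 _ _⟩
  map_add' _ _ := rfl
  map_smul' _ _ := rfl

theorem restrictDoubleCoset_indRep (x : G) (u : K) (f : Ind H ρ) :
    restrictDoubleCoset H K ρ x (indRep H ρ u f) =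
      indRep (interSub H K x) (ρ.comp (conjHom H K x)) u (restrictDoubleCoset H K ρ x f) :=
  Subtype.ext <| funext fun w => by
    simp [restrictDoubleCoset, indRep, mul_assoc]

variable (H K ρ) in
def mackeyMap (R : Set G) :
    Ind H ρ →ₗ[k] Π r : R, Ind (interSub H K r) (ρ.comp (conjHom H K r)) :=
  LinearMap.pi fun r => restrictDoubleCoset H K ρ r

variable {R : Set G}

theorem mackeyMap_injective
    (hR : ∀ g : G, ∃ r ∈ R, g ∈ DoubleCoset.doubleCoset r (K : Set G) (H : Set G)) :
    Function.Injective (mackeyMap H K ρ R) := by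
  refine (injective_iff_map_eq_zero _).2 fun f hf => Subtype.ext <| funext fun g => ?_
  obtain ⟨r, hr, u, hu, h, hh, rfl⟩ :
      ∃ r ∈ R, ∃ u ∈ K, ∃ h ∈ H, g = u * r * h := by
    obtain ⟨r, hr, hg⟩ := hR g
    exact ⟨r, hr, DoubleCoset.mem_doubleCoset.1 hg⟩
  have hur : f.1 (u * r) = 0 := congrArg (fun F => (F ⟨r, hr⟩).1 ⟨u, hu⟩) hf
  show f.1 (u * r * (⟨h, hh⟩ : H)) = 0
  rw [f.2, hur, map_zero]

theorem mackeyMap_surjective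
    (hR : ∀ g : G, ∃! r, r ∈ R ∧ g ∈ DoubleCoset.doubleCoset r (K : Set G) (H : Set G)) :
    Function.Surjective (mackeyMap H K ρ R) := by
  have mem_of_eq {g : G} {r : R} {u : K} {h : H} (hg : g = u * r * h) :
      (r : G) ∈ R ∧ g ∈ DoubleCoset.doubleCoset (r : G) (K : Set G) (H : Set G) :=
    ⟨r.2, DoubleCoset.mem_doubleCoset.2 ⟨u, u.2, h, h.2, hg⟩⟩
  have hdecomp (g : G) : ∃ r : R, ∃ u : K, ∃ h : H, g = u * r * h := by
    obtain ⟨r, ⟨hr, hg⟩, -⟩ := hR g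
    obtain ⟨u, hu, h, hh, rfl⟩ := DoubleCoset.mem_doubleCoset.1 hg
    exact ⟨⟨r, hr⟩, ⟨u, hu⟩, ⟨h, hh⟩, rfl⟩
  choose r u h hg using hdecomp
  intro F
  let f : G → N := fun g => ρ (h g)⁻¹ ((F (r g)).1 (u g))
  have hf (g : G) (r' : R) (u' : K) (h' : H) (hg' : g = u' * r' * h') :
      f g = ρ h'⁻¹ ((F r').1 u') := by
    obtain rfl : r g = r' := Subtype.ext <| (hR g).unique (mem_of_eq (hg g)) (mem_of_eq hg')
    exact ind_interSub_apply_eq_of_mul_eq _ ((hg g).symm.trans hg')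
  refine ⟨⟨f, fun g h' => ?_⟩, funext fun r' => Subtype.ext <| funext fun u' => ?_⟩
  · have hgh' : g * h' = u g * r g * (h g * h' : H) := by
      rw [Subgroup.coe_mul, ← mul_assoc, ← hg g]
    rw [hf _ _ _ _ hgh', mul_inv_rev, map_mul]
    rfl
  · exact (hf _ r' u' 1 (by simp)).trans (by simp)

end Mackey

open Representation in
theorem statement11_general (k : Type) [CommRing k]
    (H K : Subgroup G)
    (N : Type) [AddCommGroup N] [Module k N] (ρ : Representation k H N)
    (R : Finset G)
    (hR : ∀ g : G, ∃! r, r ∈ R ∧ g ∈ DoubleCoset.doubleCoset r (K : Set G) (H : Set G)) :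
    ∃ φ : (Ind H ρ : Submodule k (G → N)) ≃ₗ[k]
        (Π r : {x // x ∈ R}, (Ind (interSub H K (r : G)) (ρ.comp (conjHom H K (r : G))) :
          Submodule k (K → N))),
      ∀ (u : K) (f : Ind H ρ) (r : {x // x ∈ R}),
        φ (indRep H ρ (u : G) f) r =
          indRep (interSub H K (r : G)) (ρ.comp (conjHom H K (r : G))) u (φ f r) :=
  ⟨.ofBijective (mackeyMap H K ρ (R : Set G))
      ⟨mackeyMap_injective fun g => (hR g).exists, mackeyMap_surjective hR⟩,
    fun u f r => restrictDoubleCoset_indRep (r : G) u f⟩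

open Representation in
/-- Mackey decomposition formula for modules: for subgroups
`H, K ≤ G`, a set `R` of representatives of the double cosets `K\G/H` and a
`kH`-module `N`, there is a `kK`-linear isomorphism
`Res^G_K (kG ⊗_{kH} N) ≅ ⊕_{x ∈ R} kK ⊗_{k(K ∩ xHx⁻¹)} (x·N)`,
where `x·N` is `N` with the `(K ∩ xHx⁻¹)`-action `u • n = (x⁻¹ux)n`,
i.e. the representation `ρ.comp (conjHom H K x)`. -/
theorem statement11 (k : Type) [CommRing k] (_ : Fintype G)
    (H K : Subgroup G)
    (N : Type) [AddCommGroup N] [Module k N] (ρ : Representation k H N)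
    (R : Finset G)
    (hR : ∀ g : G, ∃! r, r ∈ R ∧ g ∈ DoubleCoset.doubleCoset r (K : Set G) (H : Set G)) :
    ∃ φ : (Ind H ρ : Submodule k (G → N)) ≃ₗ[k]
        (Π r : {x // x ∈ R}, (Ind (interSub H K (r : G)) (ρ.comp (conjHom H K (r : G))) :
          Submodule k (K → N))),
      ∀ (u : K) (f : Ind H ρ) (r : {x // x ∈ R}),
        φ (indRep H ρ (u : G) f) r =
          indRep (interSub H K (r : G)) (ρ.comp (conjHom H K (r : G))) u (φ f r) :=
  statement11_general k H K N ρ R hR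

end Stmt
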